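/- Let G be a 4-connected finite simple graph with minimum degree δ, let S be a minimum cut-set of G, let H₁ be a component of G∖S, and set V₁ = V(H₁) ∪ S. Let C be a longest cycle in G which is a D₃-cycle, and let x₁x₂ be an edge of G∖C with x₁, x₂ ∈ V(H₁). If Y = R ∪ R⁺ ∪ M⁺² ⊆ V₁, where R = N_C(x₁) ∪ N_C(x₂) and M = N_C(x₁) ∩ N_C(x₂), then |V(C) ∩ V₁| ≥ 3δ − 3. -/

import Mathlib

namespace SimpleGraph

variable {V : Type*}

/-- `S` is a cut-set of `G`: deleting `S` disconnects the graph. -/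
def IsCutSet [Fintype V] (G : SimpleGraph V) (S : Finset V) : Prop :=
  ¬ (G.induce ((↑S : Set V)ᶜ)).Connected

/-- The vertex connectivity of `G`: the largest `k` such that `G` is `k`-connected,
i.e. `G` has more than `k` vertices and removing fewer than `k` vertices
always leaves a connected graph. -/
noncomputable def vertexConnectivity [Fintype V] (G : SimpleGraph V) : ℕ :=
  sSup {k | k < Fintype.card V ∧
    ∀ S : Finset V, S.card < k → (G.induce ((↑S : Set V)ᶜ)).Connected}

/-- `S` is a minimum cut-set of `G`: a cut-set whose cardinality equals
the connectivity of `G`. -/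
def IsMinCutSet [Fintype V] (G : SimpleGraph V) (S : Finset V) : Prop :=
  G.IsCutSet S ∧ S.card = G.vertexConnectivity

/-- The circumference of `G`: the length of a longest cycle (`0` if there is none). -/
noncomputable def circumference (G : SimpleGraph V) : ℕ :=
  sSup {n | ∃ (v : V) (C : G.Walk v v), C.IsCycle ∧ C.length = n}

/-- `C` is a longest cycle in `G`. -/
def IsLongestCycle {G : SimpleGraph V} {v : V} (C : G.Walk v v) : Prop :=
  C.IsCycle ∧ ∀ (w : V) (D : G.Walk w w), D.IsCycle → D.length ≤ C.length

/-- `C` is a dominating cycle: every edge of `G` has an endpoint on `C`. -/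
def IsDominatingCycle {G : SimpleGraph V} {v : V} (C : G.Walk v v) : Prop :=
  C.IsCycle ∧ ∀ a b : V, G.Adj a b → a ∈ C.support ∨ b ∈ C.support

/-- `C` is a `D₃`-cycle: every path of length at least 2 in `G` has a vertex
in common with `C`. -/
def IsD3Cycle {G : SimpleGraph V} {v : V} (C : G.Walk v v) : Prop :=
  C.IsCycle ∧ ∀ (a b : V) (P : G.Walk a b), P.IsPath → 2 ≤ P.length →
    ∃ z, z ∈ P.support ∧ z ∈ C.support

/-- The successor of a vertex `x` on the (oriented) cycle `C`
(and `x` itself if `x` does not lie on `C`). -/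
noncomputable def cycleSucc [DecidableEq V] {G : SimpleGraph V} {v : V}
    (C : G.Walk v v) (x : V) : V :=
  if h : x ∈ C.support.tail then C.support.tail.next x h else x

/-- The neighborhood of `x` on the cycle `C`, as a finset: `N(x) ∩ V(C)`. -/
def cycleNbhd [Fintype V] [DecidableEq V] {G : SimpleGraph V} [DecidableRel G.Adj]
    {v : V} (C : G.Walk v v) (x : V) : Finset V :=
  G.neighborFinset x ∩ C.support.toFinset

end SimpleGraph

/-!
All of `Y` lies on `C`, and its three parts `R`, `R⁺`, `M⁺²` are pairwise disjoint: a vertex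
`w ∈ R` with `w⁺ ∈ R`, or `m ∈ M` with `m⁺² ∈ R`, yields a path of length 2 or 3 through `x₁`, `x₂`
joining two vertices at distance 1 or 2 along `C`, and splicing it in gives a longer cycle.
Hence `|V(C) ∩ V₁| ≥ |Y| = 2|R| + |M| = |R| + |N_C(x₁)| + |N_C(x₂)|`. Since `C` is a `D₃`-cycle,
the only neighbour of `xᵢ` off `C` is its partner, so `|N_C(xᵢ)| ≥ δ - 1`, and `|R| ≥ |N_C(x₁)|`.
-/

theorem Finset.card_union_image_union_image_comp {α : Type*} [DecidableEq α] {f : α → α}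
    {s : Set α} (hf : Set.InjOn f s) (hfs : Set.MapsTo f s s) {R M : Finset α} (hR : ↑R ⊆ s)
    (hM : M ⊆ R) (h₁ : ∀ w ∈ R, f w ∉ R) (h₂ : ∀ m ∈ M, f (f m) ∉ R) :
    (R ∪ R.image f ∪ M.image (f ∘ f)).card = 2 * R.card + M.card := by
  have hMs : ↑M ⊆ s := (Finset.coe_subset.mpr hM).trans hR
  have hdisj₁ : Disjoint R (R.image f) := by
    simp only [Finset.disjoint_left, Finset.mem_image, not_exists, not_and]
    exact fun u hu w hw hwu => h₁ w hw (hwu ▸ hu)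
  have hdisj₂ : Disjoint (R ∪ R.image f) (M.image (f ∘ f)) := by
    simp only [Finset.disjoint_right, Finset.mem_image, Finset.mem_union, Function.comp_apply]
    rintro _ ⟨m, hm, rfl⟩ (hu | ⟨w, hw, hwu⟩)
    · exact h₂ m hm hu
    · obtain rfl := hf (hR hw) (hfs (hMs hm)) hwu
      exact h₁ m (hM hm) hw
  rw [Finset.card_union_of_disjoint hdisj₂, Finset.card_union_of_disjoint hdisj₁,
    Finset.card_image_of_injOn (hf.mono hR), Finset.card_image_of_injOn ((hf.comp hf hfs).mono hMs)]
  ring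

namespace SimpleGraph

open Walk

variable {V : Type*} {G : SimpleGraph V} {v : V} {C : G.Walk v v}

theorem IsLongestCycle.length_add_le (hC : IsLongestCycle C) {x w : V} {P : G.Walk x w}
    (hP : P.IsPath) (hP₁ : 1 < P.length) (hPC : ∀ z ∈ P.support.tail, z ∈ C.support → z = w)
    {D : G.Walk w x} (hD : D.IsPath) (hDC : ∀ z ∈ D.support, z ∈ C.support) :
    P.length + D.length ≤ C.length := by
  have hdisj : P.support.tail.Disjoint D.support.tail := by
    intro z hzP hzD
    obtain rfl := hPC z hzP (hDC z (List.mem_of_mem_tail hzD))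
    have hnd := hD.support_nodup
    rw [← D.cons_tail_support] at hnd
    exact (List.nodup_cons.mp hnd).1 hzD
  simpa using hC.2 x _ (hP.isCycle_append hD hdisj (Or.inl hP₁))

variable [DecidableEq V]

theorem cycleSucc_rotate (hC : C.IsCycle) {u : V} (hu : u ∈ C.support) (x : V) :
    cycleSucc (C.rotate u hu) x = cycleSucc C x := by
  have hrot := support_rotate C u hu
  unfold cycleSucc
  by_cases hx : x ∈ (C.rotate u hu).support.tail
  · rw [dif_pos hx, dif_pos (hrot.mem_iff.mp hx),
      List.isRotated_next_eq hrot (hC.rotate hu).support_nodup hx]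
  · rw [dif_neg hx, dif_neg (mt hrot.mem_iff.mpr hx)]

theorem cycleSucc_cons {u w : V} {h : G.Adj u w} {p : G.Walk w u} (hc : (cons h p).IsCycle) :
    cycleSucc (cons h p) u = w := by
  have hnd : p.support.Nodup := by simpa using hc.support_nodup
  rw [cycleSucc, dif_pos (by simp)]
  simp only [support_cons, List.tail_cons]
  simpa using List.next_getLast_eq_head p.support (by simp) hnd

theorem cycleSucc_cons_cons {u w y : V} (h₁ : G.Adj u w) (h₂ : G.Adj w y) (q : G.Walk y u) :
    cycleSucc (cons h₁ (cons h₂ q)) w = y := by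
  rw [cycleSucc, dif_pos (by simp)]
  simp only [support_cons, List.tail_cons]
  cases q <;> simp

theorem Walk.IsCycle.exists_rotate_eq_cons (hC : C.IsCycle) {x : V} (hx : x ∈ C.support) :
    ∃ (h : G.Adj x (cycleSucc C x)) (D : G.Walk (cycleSucc C x) x), C.rotate x hx = cons h D := by
  have hrot := hC.rotate hx
  cases hE : C.rotate x hx with
  | nil => simp [hE] at hrot
  | cons h D =>
    rw [hE] at hrot
    obtain rfl : _ = cycleSucc C x := by rw [← cycleSucc_rotate hC hx, hE, cycleSucc_cons hrot]
    exact ⟨h, D, rfl⟩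

theorem Walk.IsCycle.exists_rotate_eq_cons_cons (hC : C.IsCycle) {x : V} (hx : x ∈ C.support) :
    ∃ (h₁ : G.Adj x (cycleSucc C x)) (h₂ : G.Adj (cycleSucc C x) (cycleSucc C (cycleSucc C x)))
      (D : G.Walk (cycleSucc C (cycleSucc C x)) x), C.rotate x hx = cons h₁ (cons h₂ D) := by
  obtain ⟨h₁, D₁, hE⟩ := hC.exists_rotate_eq_cons hx
  obtain ⟨y, h₂, D, rfl⟩ := D₁.exists_eq_cons_of_ne (G.ne_of_adj h₁).symm
  obtain rfl : y = cycleSucc C (cycleSucc C x) := by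
    rw [← cycleSucc_rotate hC hx, hE, cycleSucc_cons_cons]
  exact ⟨h₁, h₂, D, hE⟩

theorem Walk.IsCycle.isPath_of_rotate_eq_cons (hC : C.IsCycle) {x y : V} (hx : x ∈ C.support)
    {h : G.Adj x y} {D : G.Walk y x} (hE : C.rotate x hx = cons h D) :
    D.IsPath ∧ D.length + 1 = C.length ∧ ∀ z ∈ D.support, z ∈ C.support := by
  have hrot := hC.rotate hx
  rw [hE, cons_isCycle_iff] at hrot
  refine ⟨hrot.1, by simpa [hE] using C.length_rotate x hx, fun z hz => ?_⟩
  rw [← C.mem_support_rotate_iff x hx, hE]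
  exact List.mem_cons_of_mem _ hz

theorem cycleSucc_mem_support (hC : C.IsCycle) {x : V} (hx : x ∈ C.support) :
    cycleSucc C x ∈ C.support := by
  obtain ⟨h, D, hE⟩ := hC.exists_rotate_eq_cons hx
  exact (hC.isPath_of_rotate_eq_cons hx hE).2.2 _ D.start_mem_support

theorem Walk.IsCycle.adj_cycleSucc (hC : C.IsCycle) {x : V} (hx : x ∈ C.support) :
    G.Adj x (cycleSucc C x) :=
  (hC.exists_rotate_eq_cons hx).1

theorem cycleSucc_injOn (hC : C.IsCycle) : Set.InjOn (cycleSucc C) {x | x ∈ C.support} := by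
  have hmem : ∀ {x}, x ∈ C.support → x ∈ C.support.tail := fun hx => by
    rcases C.mem_support_iff.mp hx with rfl | h
    exacts [C.end_mem_tail_support hC.not_nil, h]
  intro x hx y hy hxy
  have hnd := hC.support_nodup
  rw [cycleSucc, cycleSucc, dif_pos (hmem hx), dif_pos (hmem hy)] at hxy
  rw [← List.prev_next _ hnd x (hmem hx), ← List.prev_next _ hnd y (hmem hy)]
  simp only [hxy]

theorem IsLongestCycle.length_le_one_of_isPath (hC : IsLongestCycle C) {x : V}
    (hx : x ∈ C.support) {P : G.Walk x (cycleSucc C x)} (hP : P.IsPath)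
    (hPC : ∀ z ∈ P.support.tail, z ∈ C.support → z = cycleSucc C x) : P.length ≤ 1 := by
  by_contra! hP₁
  obtain ⟨h, D, hE⟩ := hC.1.exists_rotate_eq_cons hx
  obtain ⟨hD, hDlen, hDC⟩ := hC.1.isPath_of_rotate_eq_cons hx hE
  have := hC.length_add_le hP hP₁ hPC hD hDC
  omega

theorem IsLongestCycle.length_le_two_of_isPath (hC : IsLongestCycle C) {x : V}
    (hx : x ∈ C.support) {P : G.Walk x (cycleSucc C (cycleSucc C x))} (hP : P.IsPath)
    (hPC : ∀ z ∈ P.support.tail, z ∈ C.support → z = cycleSucc C (cycleSucc C x)) :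
    P.length ≤ 2 := by
  by_contra! hP₂
  obtain ⟨h₁, h₂, D, hE⟩ := hC.1.exists_rotate_eq_cons_cons hx
  obtain ⟨hD, hDlen, hDC⟩ := hC.1.isPath_of_rotate_eq_cons hx hE
  have := hC.length_add_le hP (by omega) hPC hD.of_cons
    fun z hz => hDC z (List.mem_cons_of_mem _ hz)
  simp only [length_cons] at this hDlen
  omega

theorem Walk.IsCycle.cycleSucc_cycleSucc_ne (hC : C.IsCycle) {x : V} (hx : x ∈ C.support) :
    cycleSucc C (cycleSucc C x) ≠ x := by
  obtain ⟨h₁, h₂, D, hE⟩ := hC.exists_rotate_eq_cons_cons hx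
  obtain ⟨hD, hDlen, -⟩ := hC.isPath_of_rotate_eq_cons hx hE
  have h₃ := hC.three_le_length
  simp only [length_cons] at hDlen
  replace hD := hD.of_cons
  clear hE h₂
  generalize cycleSucc C (cycleSucc C x) = y at D hD hDlen
  rintro rfl
  have := length_eq_zero_iff.mpr (isPath_iff_nil.mp hD)
  omega

variable {a b x : V}

theorem IsLongestCycle.not_adj_cycleSucc_of_adj (hC : IsLongestCycle C) (hx : x ∈ C.support)
    (ha : a ∉ C.support) (hxa : G.Adj x a) : ¬ G.Adj a (cycleSucc C x) := by
  intro hay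
  have hxC' := cycleSucc_mem_support hC.1 hx
  have hne := G.ne_of_adj (hC.1.adj_cycleSucc hx)
  have hP : (cons hxa (cons hay nil)).IsPath := by
    grind [isPath_def, support_cons, support_nil, List.nodup_cons, List.nodup_nil]
  have := hC.length_le_one_of_isPath hx hP (by grind [support_cons, support_nil, List.tail_cons])
  simp at this

theorem IsLongestCycle.not_adj_cycleSucc_of_adj_adj (hC : IsLongestCycle C)
    (hx : x ∈ C.support) (ha : a ∉ C.support) (hb : b ∉ C.support) (hab : G.Adj a b)
    (hxa : G.Adj x a) : ¬ G.Adj b (cycleSucc C x) := by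
  intro hby
  have hxC' := cycleSucc_mem_support hC.1 hx
  have hne := G.ne_of_adj (hC.1.adj_cycleSucc hx)
  have hP : (cons hxa (cons hab (cons hby nil))).IsPath := by
    grind [isPath_def, support_cons, support_nil, List.nodup_cons, List.nodup_nil, G.ne_of_adj]
  have := hC.length_le_one_of_isPath hx hP (by grind [support_cons, support_nil, List.tail_cons])
  simp at this

theorem IsLongestCycle.not_adj_cycleSucc_cycleSucc_of_adj_adj (hC : IsLongestCycle C)
    (hx : x ∈ C.support) (ha : a ∉ C.support) (hb : b ∉ C.support) (hab : G.Adj a b)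
    (hxa : G.Adj x a) : ¬ G.Adj b (cycleSucc C (cycleSucc C x)) := by
  intro hby
  have hxC'' := cycleSucc_mem_support hC.1 (cycleSucc_mem_support hC.1 hx)
  have hne := hC.1.cycleSucc_cycleSucc_ne hx
  have hP : (cons hxa (cons hab (cons hby nil))).IsPath := by
    grind [isPath_def, support_cons, support_nil, List.nodup_cons, List.nodup_nil, G.ne_of_adj]
  have := hC.length_le_two_of_isPath hx hP (by grind [support_cons, support_nil, List.tail_cons])
  simp at this

variable [Fintype V] [DecidableRel G.Adj]

@[simp]
theorem mem_cycleNbhd {u : V} : u ∈ cycleNbhd C x ↔ G.Adj x u ∧ u ∈ C.support := by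
  simp [cycleNbhd]

theorem IsD3Cycle.minDegree_le_card_cycleNbhd_add_one (hD3 : IsD3Cycle C) (hab : G.Adj a b)
    (ha : a ∉ C.support) (hb : b ∉ C.support) : G.minDegree ≤ (cycleNbhd C a).card + 1 := by
  have hsub : G.neighborFinset a ⊆ insert b (cycleNbhd C a) := by
    intro y hy
    rw [mem_neighborFinset] at hy
    by_contra hy'
    simp only [Finset.mem_insert, mem_cycleNbhd, not_or, not_and] at hy'
    have hP : (cons hy.symm (cons hab nil)).IsPath := by
      grind [isPath_def, support_cons, support_nil, List.nodup_cons, List.nodup_nil, G.ne_of_adj]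
    obtain ⟨z, hz, hzC⟩ := hD3.2 y b _ hP (by simp)
    simp only [support_cons, support_nil, List.mem_cons, List.not_mem_nil, or_false] at hz
    rcases hz with rfl | rfl | rfl
    exacts [hy'.2 hy hzC, ha hzC, hb hzC]
  calc G.minDegree ≤ G.degree a := G.minDegree_le_degree a
    _ ≤ (insert b (cycleNbhd C a)).card := Finset.card_le_card hsub
    _ ≤ (cycleNbhd C a).card + 1 := Finset.card_insert_le _ _

theorem IsLongestCycle.cycleSucc_notMem_cycleNbhd_union (hC : IsLongestCycle C) (hab : G.Adj a b)
    (ha : a ∉ C.support) (hb : b ∉ C.support) {w : V}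
    (hw : w ∈ cycleNbhd C a ∪ cycleNbhd C b) :
    cycleSucc C w ∉ cycleNbhd C a ∪ cycleNbhd C b := by
  simp only [Finset.mem_union, mem_cycleNbhd] at hw ⊢
  rintro (⟨hw', -⟩ | ⟨hw', -⟩) <;> rcases hw with ⟨hwa, hwC⟩ | ⟨hwb, hwC⟩
  · exact hC.not_adj_cycleSucc_of_adj hwC ha hwa.symm hw'
  · exact hC.not_adj_cycleSucc_of_adj_adj hwC hb ha hab.symm hwb.symm hw'
  · exact hC.not_adj_cycleSucc_of_adj_adj hwC ha hb hab hwa.symm hw'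
  · exact hC.not_adj_cycleSucc_of_adj hwC hb hwb.symm hw'

theorem IsLongestCycle.cycleSucc_cycleSucc_notMem_cycleNbhd_union (hC : IsLongestCycle C)
    (hab : G.Adj a b) (ha : a ∉ C.support) (hb : b ∉ C.support) {m : V}
    (hm : m ∈ cycleNbhd C a ∩ cycleNbhd C b) :
    cycleSucc C (cycleSucc C m) ∉ cycleNbhd C a ∪ cycleNbhd C b := by
  simp only [Finset.mem_inter, Finset.mem_union, mem_cycleNbhd] at hm ⊢
  obtain ⟨⟨hma, hmC⟩, hmb, -⟩ := hm
  rintro (⟨h, -⟩ | ⟨h, -⟩)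
  · exact hC.not_adj_cycleSucc_cycleSucc_of_adj_adj hmC hb ha hab.symm hmb.symm h
  · exact hC.not_adj_cycleSucc_cycleSucc_of_adj_adj hmC ha hb hab hma.symm h

end SimpleGraph

open SimpleGraph in
theorem statement_9_general {V : Type*} [Fintype V] [DecidableEq V]
    (G : SimpleGraph V) [DecidableRel G.Adj]
    (V₁ : Set V)
    {v : V} (C : G.Walk v v) (hC : IsLongestCycle C) (hD3 : IsD3Cycle C)
    (x₁ x₂ : V) (hadj : G.Adj x₁ x₂) (hx₁ : x₁ ∉ C.support) (hx₂ : x₂ ∉ C.support)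
    (R M Y : Finset V)
    (hR : R = cycleNbhd C x₁ ∪ cycleNbhd C x₂)
    (hM : M = cycleNbhd C x₁ ∩ cycleNbhd C x₂)
    (hY : Y = R ∪ R.image (cycleSucc C) ∪ M.image (cycleSucc C ∘ cycleSucc C))
    (hYV₁ : (↑Y : Set V) ⊆ V₁) :
    3 * G.minDegree ≤ ({z | z ∈ C.support} ∩ V₁).ncard + 3 := by
  have hRC : ↑R ⊆ {z | z ∈ C.support} := fun u hu => by
    rw [hR, Finset.coe_union] at hu
    rcases hu with hu | hu <;> exact (mem_cycleNbhd.mp hu).2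
  have hMR : M ⊆ R := hR ▸ hM ▸ Finset.inter_subset_union
  have hsucc : Set.MapsTo (cycleSucc C) {z | z ∈ C.support} {z | z ∈ C.support} :=
    fun _ => cycleSucc_mem_support hC.1
  have hYcard : Y.card = 2 * R.card + M.card := by
    rw [hY]
    exact Finset.card_union_image_union_image_comp (cycleSucc_injOn hC.1) hsucc hRC hMR
      (hR ▸ fun _ => hC.cycleSucc_notMem_cycleNbhd_union hadj hx₁ hx₂)
      (hR ▸ hM ▸ fun _ => hC.cycleSucc_cycleSucc_notMem_cycleNbhd_union hadj hx₁ hx₂)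
  have hYC : ↑Y ⊆ {z | z ∈ C.support} ∩ V₁ := by
    refine fun u hu => ⟨?_, hYV₁ hu⟩
    rw [hY] at hu
    simp only [Finset.coe_union, Finset.coe_image] at hu
    rcases hu with (hu | ⟨w, hw, rfl⟩) | ⟨m, hm, rfl⟩
    exacts [hRC hu, hsucc (hRC hw), hsucc (hsucc (hRC (hMR hm)))]
  have hYle : Y.card ≤ ({z | z ∈ C.support} ∩ V₁).ncard := by
    rw [← Set.ncard_coe_finset]
    exact Set.ncard_le_ncard hYC (Set.toFinite _)
  have hRM : R.card + M.card = (cycleNbhd C x₁).card + (cycleNbhd C x₂).card := by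
    rw [hR, hM]
    exact Finset.card_union_add_card_inter _ _
  have hR₁ : (cycleNbhd C x₁).card ≤ R.card := hR ▸ Finset.card_le_card Finset.subset_union_left
  have hδ₁ := hD3.minDegree_le_card_cycleNbhd_add_one hadj hx₁ hx₂
  have hδ₂ := hD3.minDegree_le_card_cycleNbhd_add_one hadj.symm hx₂ hx₁
  omega

open SimpleGraph in
/-- If `Y ⊆ V₁ = V(H₁) ∪ S`, then `|V(C) ∩ V₁| ≥ 3δ - 3`. -/
theorem statement_9 {V : Type*} [Fintype V] [DecidableEq V]
    (G : SimpleGraph V) [DecidableRel G.Adj]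
    (h4 : 4 ≤ G.vertexConnectivity)
    (S : Finset V) (hS : G.IsMinCutSet S)
    (H₁ : (G.induce ((↑S : Set V)ᶜ)).ConnectedComponent)
    (V₁ : Set V) (hV₁ : V₁ = (Subtype.val '' H₁.supp) ∪ ↑S)
    {v : V} (C : G.Walk v v) (hC : IsLongestCycle C) (hD3 : IsD3Cycle C)
    (x₁ x₂ : V) (hadj : G.Adj x₁ x₂) (hx₁ : x₁ ∉ C.support) (hx₂ : x₂ ∉ C.support)
    (hx₁H : x₁ ∈ Subtype.val '' H₁.supp) (hx₂H : x₂ ∈ Subtype.val '' H₁.supp)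
    (R M Y : Finset V)
    (hR : R = cycleNbhd C x₁ ∪ cycleNbhd C x₂)
    (hM : M = cycleNbhd C x₁ ∩ cycleNbhd C x₂)
    (hY : Y = R ∪ R.image (cycleSucc C) ∪ M.image (cycleSucc C ∘ cycleSucc C))
    (hYV₁ : (↑Y : Set V) ⊆ V₁) :
    3 * G.minDegree ≤ ({z | z ∈ C.support} ∩ V₁).ncard + 3 :=
  statement_9_general G V₁ C hC hD3 x₁ x₂ hadj hx₁ hx₂ R M Y hR hM hY hYV₁
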